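/- Let S and I be independent nonnegative random variables and N₀ > 0. Then E[ln(1 + S/(I + N₀))] = ∫₀^∞ L_I(z/N₀) (1 − L_S(z/N₀)) e^{−z}/z dz, where L_S and L_I are the Laplace transforms of S and I. -/

import Mathlib

/-!
For fixed `i, s ≥ 0` the integrand `e^{-zi/N₀} (1 - e^{-zs/N₀}) e^{-z} / z` equals
`(e^{-cz} - e^{-dz}) / z` with `c = (i + N₀) / N₀` and `d = (i + s + N₀) / N₀`, so Frullani's
integral evaluates it to `log (d / c) = log (1 + s / (i + N₀))`. Taking `(i, s) = (I ω, S ω)` and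
integrating over `ω`, Fubini's theorem applies because the integrand is nonnegative, hence its
integrability on the product is that of `log (1 + S / (I + N₀))`; after swapping, independence
factors the inner expectation into the two Laplace transforms.
-/

open MeasureTheory ProbabilityTheory Real Set Filter Topology

lemma exp_neg_mul_le_one {t x : ℝ} (ht : 0 ≤ t) (hx : 0 ≤ x) : exp (-t * x) ≤ 1 :=
  exp_le_one_iff.2 (by nlinarith)

lemma integrableOn_Ioi_inv_mul_exp_neg_sub {a b : ℝ} (ha : 0 < a) (hb : 0 < b) :
    IntegrableOn (fun x => x⁻¹ * (exp (-(a * x)) - exp (-(b * x)))) (Ioi 0) := by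
  wlog hab : a ≤ b generalizing a b
  · exact (this hb ha (le_of_not_ge hab)).neg.congr_fun
      (fun x _ => by simp only [Pi.neg_apply]; ring) measurableSet_Ioi
  refine Integrable.mono' ((exp_neg_integrableOn_Ioi 0 ha).const_mul (b - a)) (by fun_prop) ?_
  filter_upwards [ae_restrict_mem measurableSet_Ioi] with x (hx : 0 < x)
  have hsplit : exp (-(b * x)) = exp (-(a * x)) * exp (-((b - a) * x)) := by
    rw [← exp_add]; ring_nf
  have hle : 1 - exp (-((b - a) * x)) ≤ (b - a) * x := by
    linarith [add_one_le_exp (-((b - a) * x))]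
  have hle_one : exp (-((b - a) * x)) ≤ 1 := by
    simpa only [neg_mul] using exp_neg_mul_le_one (sub_nonneg.2 hab) hx.le
  have hpos := exp_pos (-(a * x))
  rw [norm_mul, norm_inv, norm_of_nonneg hx.le, hsplit,
    norm_of_nonneg (by nlinarith), inv_mul_le_iff₀ hx, neg_mul]
  nlinarith

lemma integral_Ioi_inv_mul_exp_neg_sub {a b : ℝ} (ha : 0 < a) (hb : 0 < b) :
    ∫ x in Ioi 0, x⁻¹ * (exp (-(a * x)) - exp (-(b * x))) = log (b / a) := by
  have hcont : Continuous fun x : ℝ => exp (-x) := by fun_prop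
  have hL : Tendsto (fun x : ℝ => exp (-x)) (𝓝[>] 0) (𝓝 1) :=
    (hcont.tendsto' 0 1 (by simp)).mono_left nhdsWithin_le_nhds
  simpa using Frullani.integral_Ioi_eq (hcont.locallyIntegrable.locallyIntegrableOn _)
    ha hb hL tendsto_exp_neg_atTop_nhds_zero (integrableOn_Ioi_inv_mul_exp_neg_sub ha hb)

noncomputable def hamdiKernel (N₀ i s z : ℝ) : ℝ :=
  exp (-(z / N₀) * i) * (1 - exp (-(z / N₀) * s)) * exp (-z) / z

lemma hamdiKernel_eq {N₀ : ℝ} (hN : N₀ ≠ 0) (i s : ℝ) :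
    hamdiKernel N₀ i s =
      fun z => z⁻¹ * (exp (-((i + N₀) / N₀ * z)) - exp (-((i + s + N₀) / N₀ * z))) := by
  funext z
  have h₁ : exp (-((i + N₀) / N₀ * z)) = exp (-(z / N₀) * i) * exp (-z) := by
    rw [← exp_add]; congr 1; field_simp; ring
  have h₂ : exp (-((i + s + N₀) / N₀ * z)) =
      exp (-(z / N₀) * i) * exp (-(z / N₀) * s) * exp (-z) := by
    rw [← exp_add, ← exp_add]; congr 1; field_simp; ring
  rw [hamdiKernel, h₁, h₂]
  ring

lemma hamdiKernel_nonneg {N₀ s z : ℝ} (i : ℝ) (hN : 0 ≤ N₀) (hs : 0 ≤ s) (hz : 0 ≤ z) :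
    0 ≤ hamdiKernel N₀ i s z :=
  div_nonneg (mul_nonneg (mul_nonneg (exp_pos _).le
    (sub_nonneg.2 (exp_neg_mul_le_one (div_nonneg hz hN) hs))) (exp_pos _).le) hz

section
variable {N₀ i s : ℝ}

lemma integrableOn_hamdiKernel (hN : 0 < N₀) (hi : 0 ≤ i) (hs : 0 ≤ s) :
    IntegrableOn (hamdiKernel N₀ i s) (Ioi 0) := by
  rw [hamdiKernel_eq hN.ne']
  exact integrableOn_Ioi_inv_mul_exp_neg_sub (by positivity) (by positivity)

lemma integral_hamdiKernel (hN : 0 < N₀) (hi : 0 ≤ i) (hs : 0 ≤ s) :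
    ∫ z in Ioi 0, hamdiKernel N₀ i s z = log (1 + s / (i + N₀)) := by
  rw [hamdiKernel_eq hN.ne', integral_Ioi_inv_mul_exp_neg_sub (by positivity) (by positivity)]
  congr 1
  field_simp
  ring

end

section
variable {Ω : Type*} {mΩ : MeasurableSpace Ω} {μ : Measure Ω} {X Y : Ω → ℝ} {t N₀ z : ℝ}

lemma integrable_exp_neg_mul [IsFiniteMeasure μ] (hX : AEMeasurable X μ) (hXnn : 0 ≤ᵐ[μ] X)
    (ht : 0 ≤ t) : Integrable (fun ω => exp (-t * X ω)) μ := by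
  refine Integrable.of_bound (by fun_prop) 1 ?_
  filter_upwards [hXnn] with ω hω
  rw [norm_of_nonneg (exp_pos _).le]
  exact exp_neg_mul_le_one ht hω

lemma ProbabilityTheory.IndepFun.integral_exp_neg_mul_mul_one_sub [IsFiniteMeasure μ]
    (hXY : IndepFun X Y μ) (hX : AEMeasurable X μ) (hY : AEMeasurable Y μ)
    (hXnn : 0 ≤ᵐ[μ] X) (hYnn : 0 ≤ᵐ[μ] Y) (ht : 0 ≤ t) :
    ∫ ω, exp (-t * Y ω) * (1 - exp (-t * X ω)) ∂μ =
      (∫ ω, exp (-t * Y ω) ∂μ) * (1 - ∫ ω, exp (-t * X ω) ∂μ) := by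
  have hmeas : Measurable fun x : ℝ => exp (-t * x) := by fun_prop
  have hmul : ∫ ω, exp (-t * Y ω) * exp (-t * X ω) ∂μ =
      (∫ ω, exp (-t * Y ω) ∂μ) * ∫ ω, exp (-t * X ω) ∂μ :=
    (hXY.symm.comp hmeas hmeas).integral_fun_mul_eq_mul_integral (by fun_prop) (by fun_prop)
  have hYint := integrable_exp_neg_mul hY hYnn ht
  have hprod : Integrable (fun ω => exp (-t * Y ω) * exp (-t * X ω)) μ := by
    simpa only [← exp_add, ← mul_add, Pi.add_apply] using
      integrable_exp_neg_mul (hY.add hX) (hYnn.mp (hXnn.mono fun _ hx hy => add_nonneg hy hx)) ht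
  simp only [mul_sub, mul_one]
  rw [integral_sub hYint hprod, hmul]

lemma ProbabilityTheory.IndepFun.integral_hamdiKernel [IsFiniteMeasure μ] (hXY : IndepFun X Y μ)
    (hX : AEMeasurable X μ) (hY : AEMeasurable Y μ) (hXnn : 0 ≤ᵐ[μ] X) (hYnn : 0 ≤ᵐ[μ] Y)
    (hz : 0 ≤ z / N₀) :
    ∫ ω, hamdiKernel N₀ (Y ω) (X ω) z ∂μ =
      (∫ ω, exp (-(z / N₀) * Y ω) ∂μ) * (1 - ∫ ω, exp (-(z / N₀) * X ω) ∂μ) * exp (-z) / z := by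
  simp only [hamdiKernel, mul_div_assoc]
  rw [integral_mul_const, hXY.integral_exp_neg_mul_mul_one_sub hX hY hXnn hYnn hz]

lemma integrable_prod_hamdiKernel [SFinite μ] (hN : 0 < N₀) (hX : Measurable X)
    (hY : Measurable Y) (hXnn : 0 ≤ᵐ[μ] X) (hYnn : 0 ≤ᵐ[μ] Y)
    (hint : Integrable (fun ω => log (1 + X ω / (Y ω + N₀))) μ) :
    Integrable (Function.uncurry fun ω z => hamdiKernel N₀ (Y ω) (X ω) z)
      (μ.prod (volume.restrict (Ioi 0))) := by
  have hmeas : Measurable (Function.uncurry fun ω z => hamdiKernel N₀ (Y ω) (X ω) z) := by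
    unfold hamdiKernel Function.uncurry
    fun_prop
  rw [integrable_prod_iff hmeas.aestronglyMeasurable]
  refine ⟨?_, hint.congr ?_⟩
  · filter_upwards [hXnn, hYnn] with ω hx hy
    simp only [Function.uncurry_apply_pair]
    exact integrableOn_hamdiKernel hN hy hx
  · filter_upwards [hXnn, hYnn] with ω hx hy
    simp only [Function.uncurry_apply_pair]
    rw [← integral_hamdiKernel hN hy hx]
    refine setIntegral_congr_fun measurableSet_Ioi fun z (hz : 0 < z) => ?_
    exact (norm_of_nonneg (hamdiKernel_nonneg _ hN.le hx hz.le)).symm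

end

/-- Conditional spectral efficiency via Hamdi's lemma: for independent nonnegative
random variables `S` (signal power) and `I` (interference power) and noise power
`N₀ > 0`, `E[ln(1 + S/(I + N₀))] = ∫₀^∞ L_I(z/N₀) (1 − L_S(z/N₀)) e^{−z}/z dz`. -/
theorem spectral_efficiency_laplace {Ω : Type*} [MeasureSpace Ω]
    {μ : Measure Ω} [IsProbabilityMeasure μ]
    (S I : Ω → ℝ) (hS : Measurable S) (hI : Measurable I)
    (hSpos : ∀ ω, 0 ≤ S ω) (hIpos : ∀ ω, 0 ≤ I ω)
    (hindep : IndepFun S I μ)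
    (N₀ : ℝ) (hN₀ : 0 < N₀)
    (hint : Integrable (fun ω => Real.log (1 + S ω / (I ω + N₀))) μ) :
    (∫ ω, Real.log (1 + S ω / (I ω + N₀)) ∂μ)
      = ∫ z in Set.Ioi (0:ℝ),
          (∫ ω, Real.exp (-(z / N₀) * I ω) ∂μ) *
            (1 - ∫ ω, Real.exp (-(z / N₀) * S ω) ∂μ) * Real.exp (-z) / z := by
  have hSnn : 0 ≤ᵐ[μ] S := ae_of_all _ hSpos
  have hInn : 0 ≤ᵐ[μ] I := ae_of_all _ hIpos
  calc (∫ ω, log (1 + S ω / (I ω + N₀)) ∂μ)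
      = ∫ ω, (∫ z in Ioi 0, hamdiKernel N₀ (I ω) (S ω) z) ∂μ :=
        integral_congr_ae <| ae_of_all _ fun ω =>
          (integral_hamdiKernel hN₀ (hIpos ω) (hSpos ω)).symm
    _ = ∫ z in Ioi 0, ∫ ω, hamdiKernel N₀ (I ω) (S ω) z ∂μ :=
        integral_integral_swap (integrable_prod_hamdiKernel hN₀ hS hI hSnn hInn hint)
    _ = _ := setIntegral_congr_fun measurableSet_Ioi fun z (hz : 0 < z) =>
        hindep.integral_hamdiKernel hS.aemeasurable hI.aemeasurable hSnn hInn
          (div_nonneg hz.le hN₀.le)
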